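/- arXiv:1111.6085 — 2 statements merged into one kernel-verified Lean document; each statement's English description precedes it below -/
import Mathlib

section
/- For any x, y > 0 and any β ∈ ℝ, the β-divergence d_β(x|y) is nonnegative, and d_β(x|y) = 0 if and only if x = y. -/
noncomputable def betaDiv (β x y : ℝ) : ℝ :=
  if β = 0 then x / y - Real.log (x / y) - 1
  else if β = 1 then x * Real.log (x / y) - x + y
  else x ^ β / (β * (β - 1)) + y ^ β / β - x * y ^ (β - 1) / (β - 1)

/-!
The β-divergence is homogeneous of degree β, so `d_β(x|y) = y ^ β * d_β(x/y|1)`. For β ∉ {0, 1},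
`d_β(t|1)` is the gap `t ^ β - 1 - β (t - 1)` of Bernoulli's inequality divided by `β (β - 1)`,
and the gap has the sign of `β (β - 1)` for `t ≠ 1`; for β ∈ {0, 1} the strict inequality
`log s < s - 1` (at `s = t` and `s = t⁻¹`) plays the same role.
-/

open Real

namespace Real

/- The substitution `t ↦ t⁻¹` turns the gap `t ^ p - 1 - p * (t - 1)` into `t` times the gap
for the exponent `1 - p > 1`. -/
lemma one_add_mul_sub_one_lt_rpow_of_neg {p t : ℝ} (hp : p < 0) (ht : 0 < t) (ht1 : t ≠ 1) :
    1 + p * (t - 1) < t ^ p := by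
  have hs : -1 ≤ t⁻¹ - 1 := by linarith [inv_pos.2 ht]
  have hs' : t⁻¹ - 1 ≠ 0 := sub_ne_zero.2 (inv_ne_one.2 ht1)
  have hbern := one_add_mul_self_lt_rpow_one_add hs hs' (by linarith : 1 < 1 - p)
  rw [add_sub_cancel, inv_rpow ht.le, ← rpow_neg ht.le, neg_sub] at hbern
  have hdual : t * t ^ (p - 1) = t ^ p := by
    rw [← rpow_one_add' ht.le (by linarith), add_sub_cancel]
  have := mul_lt_mul_of_pos_left hbern ht
  rw [hdual, mul_add, mul_one, ← mul_assoc, mul_comm t, mul_assoc, mul_sub, mul_inv_cancel₀ ht.ne',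
    mul_one] at this
  linarith

lemma rpow_sub_one_sub_mul_div_pos {p t : ℝ} (hp0 : p ≠ 0) (hp1 : p ≠ 1) (ht : 0 < t)
    (ht1 : t ≠ 1) : 0 < (t ^ p - 1 - p * (t - 1)) / (p * (p - 1)) := by
  have hs : -1 ≤ t - 1 := by linarith
  have hs' : t - 1 ≠ 0 := sub_ne_zero.2 ht1
  rcases lt_or_gt_of_ne hp0 with hneg | hpos
  · have := one_add_mul_sub_one_lt_rpow_of_neg hneg ht ht1
    exact div_pos (by linarith) (mul_pos_of_neg_of_neg hneg (by linarith))
  rcases lt_or_gt_of_ne hp1 with hlt | hgt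
  · have := rpow_one_add_lt_one_add_mul_self hs hs' hpos hlt
    rw [add_sub_cancel] at this
    exact div_pos_of_neg_of_neg (by linarith) (mul_neg_of_pos_of_neg hpos (by linarith))
  · have := one_add_mul_self_lt_rpow_one_add hs hs' hgt
    rw [add_sub_cancel] at this
    exact div_pos (by linarith) (mul_pos hpos (by linarith))

end Real

lemma betaDiv_mul_mul (β : ℝ) {c x y : ℝ} (hc : 0 < c) (hx : 0 ≤ x) (hy : 0 ≤ y) :
    betaDiv β (c * x) (c * y) = c ^ β * betaDiv β x y := by
  have hcancel : c * x / (c * y) = x / y := mul_div_mul_left x y hc.ne'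
  unfold betaDiv
  split_ifs with h0 h1
  · rw [hcancel, h0, rpow_zero, one_mul]
  · rw [hcancel, h1, rpow_one]; ring
  · have hc' : c * c ^ (β - 1) = c ^ β := by
      rw [← rpow_one_add' hc.le (by simpa using h0), add_sub_cancel]
    rw [mul_rpow hc.le hx, mul_rpow hc.le hy, mul_rpow hc.le hy, ← hc']
    ring

lemma betaDiv_eq_rpow_mul_betaDiv_div_one (β : ℝ) {x y : ℝ} (hx : 0 < x) (hy : 0 < y) :
    betaDiv β x y = y ^ β * betaDiv β (x / y) 1 := by
  rw [← betaDiv_mul_mul β hy (div_pos hx hy).le zero_le_one, mul_div_cancel₀ x hy.ne', mul_one]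

lemma betaDiv_one_one (β : ℝ) : betaDiv β 1 1 = 0 := by
  unfold betaDiv
  split_ifs with h0 h1
  · simp
  · simp
  · simp only [one_rpow, mul_one]
    field_simp [sub_ne_zero.2 h1]
    ring

lemma betaDiv_one_pos (β : ℝ) {t : ℝ} (ht : 0 < t) (ht1 : t ≠ 1) : 0 < betaDiv β t 1 := by
  unfold betaDiv
  split_ifs with h0 h1
  · rw [div_one]
    linarith [log_lt_sub_one_of_pos ht ht1]
  · -- `log t⁻¹ < t⁻¹ - 1`, multiplied by `t`
    have := log_lt_sub_one_of_pos (inv_pos.2 ht) (inv_ne_one.2 ht1)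
    rw [log_inv, lt_sub_iff_add_lt, ← mul_lt_mul_iff_of_pos_left ht, mul_inv_cancel₀ ht.ne'] at this
    rw [div_one]
    linarith
  · have hβ1 : β - 1 ≠ 0 := sub_ne_zero.2 h1
    have hform : t ^ β / (β * (β - 1)) + 1 ^ β / β - t * 1 ^ (β - 1) / (β - 1)
        = (t ^ β - 1 - β * (t - 1)) / (β * (β - 1)) := by
      rw [one_rpow, one_rpow]
      field_simp
      ring
    rw [hform]
    exact rpow_sub_one_sub_mul_div_pos h0 h1 ht ht1

theorem betaDiv_nonneg_eq_zero_iff (β x y : ℝ) (hx : 0 < x) (hy : 0 < y) :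
    0 ≤ betaDiv β x y ∧ (betaDiv β x y = 0 ↔ x = y) := by
  rw [betaDiv_eq_rpow_mul_betaDiv_div_one β hx hy]
  have hyβ : 0 < y ^ β := rpow_pos_of_pos hy β
  by_cases hxy : x = y
  · subst hxy
    simp [div_self hx.ne', betaDiv_one_one]
  · have ht1 : x / y ≠ 1 := fun h => hxy ((div_eq_one_iff_eq hy.ne').1 h)
    have hpos := mul_pos hyβ (betaDiv_one_pos β (div_pos hx hy) ht1)
    exact ⟨hpos.le, iff_of_false hpos.ne' hxy⟩
end

section
/- For fixed x > 0, the map y ↦ d_β(x|y) on y > 0 is convex when 1 ≤ β ≤ 2, and can be written as the sum of a convex function of y and a concave function of y for any β ∈ ℝ: specifically, for β < 1, y ↦ −x·y^(β−1)/(β−1) is convex and y ↦ y^β/β is concave on (0,∞). -/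
/-! Away from `β ∈ {0, 1}`, `d_β(x|·)` is a constant plus the power terms `y ^ β / β` and
`-x y ^ (β - 1) / (β - 1)`. A term `c y ^ p` has second derivative `c p (p - 1) y ^ (p - 2)`,
whose sign on `(0, ∞)` is that of `c p (p - 1)`: this is `β - 1` for the first term and
`x (2 - β)` for the second. At `β = 1` the divergence is `y - x log y` up to a constant. -/

open Set Real

lemma hasDerivAt_const_mul_rpow (c p : ℝ) {y : ℝ} (hy : 0 < y) :
    HasDerivAt (fun z : ℝ => c * z ^ p) (c * p * y ^ (p - 1)) y := by
  simpa only [mul_assoc] using (hasDerivAt_rpow_const (Or.inl hy.ne')).const_mul c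

lemma convexOn_const_mul_rpow_Ioi {c p : ℝ} (h : 0 ≤ c * p * (p - 1)) :
    ConvexOn ℝ (Ioi 0) fun y : ℝ => c * y ^ p := by
  refine convexOn_of_hasDerivWithinAt2_nonneg (convex_Ioi 0)
    (f' := fun y => c * p * y ^ (p - 1)) (f'' := fun y => c * p * (p - 1) * y ^ (p - 1 - 1))
    (fun y hy => (hasDerivAt_const_mul_rpow c p hy).continuousAt.continuousWithinAt)
    ?_ ?_ ?_ <;> rw [interior_Ioi] <;> intro y (hy : 0 < y)
  · exact (hasDerivAt_const_mul_rpow c p hy).hasDerivWithinAt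
  · exact (hasDerivAt_const_mul_rpow (c * p) (p - 1) hy).hasDerivWithinAt
  · exact mul_nonneg h (rpow_pos_of_pos hy _).le

lemma concaveOn_const_mul_rpow_Ioi {c p : ℝ} (h : c * p * (p - 1) ≤ 0) :
    ConcaveOn ℝ (Ioi 0) fun y : ℝ => c * y ^ p := by
  refine neg_convexOn_iff.mp ?_
  simpa only [Pi.neg_def, neg_mul] using
    convexOn_const_mul_rpow_Ioi (c := -c) (p := p) (by linarith)

lemma convexOn_neg_mul_rpow_sub_one_div {β x : ℝ} (hx : 0 ≤ x) (hβ : β ≤ 2) :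
    ConvexOn ℝ (Ioi 0) fun y : ℝ => -(x * y ^ (β - 1)) / (β - 1) := by
  refine (convexOn_const_mul_rpow_Ioi (c := -x / (β - 1)) (p := β - 1) ?_).congr
    fun y _ => by ring
  rcases eq_or_ne β 1 with rfl | hβ1
  · simp
  · rw [div_mul_cancel₀ _ (sub_ne_zero.2 hβ1)]
    nlinarith

lemma convexOn_betaDiv_one {x : ℝ} (hx : 0 < x) : ConvexOn ℝ (Ioi 0) (betaDiv 1 x) := by
  have hlog : ConvexOn ℝ (Ioi 0) fun y => x * -log y :=
    strictConcaveOn_log_Ioi.concaveOn.neg.smul hx.le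
  refine ((hlog.add (convexOn_id (convex_Ioi 0))).add_const (x * log x - x)).congr ?_
  intro y (hy : 0 < y)
  simp only [betaDiv, one_ne_zero, if_false, if_true, Pi.add_apply, id, log_div hx.ne' hy.ne']
  ring

lemma convexOn_betaDiv_of_one_lt {β x : ℝ} (hx : 0 ≤ x) (h1 : 1 < β) (h2 : β ≤ 2) :
    ConvexOn ℝ (Ioi 0) (betaDiv β x) := by
  have hpow : ConvexOn ℝ (Ioi 0) fun y : ℝ => β⁻¹ * y ^ β :=
    convexOn_const_mul_rpow_Ioi (by field_simp; linarith)
  refine ((hpow.add (convexOn_neg_mul_rpow_sub_one_div hx h2)).add_const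
    (x ^ β / (β * (β - 1)))).congr fun y _ => ?_
  simp only [betaDiv, if_neg (by linarith : β ≠ 0), if_neg h1.ne', Pi.add_apply]
  ring

theorem betaDiv_convexity (β x : ℝ) (hx : 0 < x) :
    (1 ≤ β → β ≤ 2 → ConvexOn ℝ (Set.Ioi (0:ℝ)) (fun y => betaDiv β x y)) ∧
    (β < 1 →
      ConvexOn ℝ (Set.Ioi (0:ℝ)) (fun y : ℝ => -(x * y ^ (β - 1)) / (β - 1)) ∧
      ConcaveOn ℝ (Set.Ioi (0:ℝ))
        (fun y : ℝ => if β = 0 then Real.log y else y ^ β / β)) := by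
  refine ⟨fun h1 h2 => ?_,
    fun hβ => ⟨convexOn_neg_mul_rpow_sub_one_div hx.le (by linarith), ?_⟩⟩
  · rcases h1.eq_or_lt with rfl | h1
    · exact convexOn_betaDiv_one hx
    · exact convexOn_betaDiv_of_one_lt hx.le h1 h2
  · by_cases h0 : β = 0
    · simpa only [h0, if_true] using strictConcaveOn_log_Ioi.concaveOn
    · simp only [h0, if_false]
      refine (concaveOn_const_mul_rpow_Ioi (c := β⁻¹) (p := β) ?_).congr fun y _ => by ring
      field_simp
      linarith
end
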